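/- The maximum over (n-1)-dimensional subspaces L of ℝ^n of |sign(L)| equals 3^n - 2(2^n - 1), and the minimum equals 3^{n-1}, for n ≥ 2. -/

import Mathlib

open Matrix

noncomputable section

def signVec {n : ℕ} (x : Fin n → ℝ) : Fin n → SignType := fun i => SignType.sign (x i)

def signSet {n : ℕ} (L : Submodule ℝ (Fin n → ℝ)) : Set (Fin n → SignType) :=
  signVec '' (L : Set (Fin n → ℝ))

def IsRationalVec {n : ℕ} (v : Fin n → ℝ) : Prop := ∀ i, ∃ q : ℚ, v i = (q : ℝ)

def IsRationalSubspace {n : ℕ} (K : Submodule ℝ (Fin n → ℝ)) : Prop :=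
  ∃ s : Set (Fin n → ℝ), (∀ v ∈ s, IsRationalVec v) ∧ Submodule.span ℝ s = K

def IsRationalMatrix {m n : ℕ} (B : Matrix (Fin m) (Fin n) ℝ) : Prop :=
  ∀ i j, ∃ q : ℚ, B i j = (q : ℝ)

def mr {m n : ℕ} (A : Matrix (Fin m) (Fin n) SignType) : ℕ :=
  sInf {r | ∃ B : Matrix (Fin m) (Fin n) ℝ, (∀ i j, SignType.sign (B i j) = A i j) ∧ B.rank = r}

def SignPerp {n : ℕ} (c x : Fin n → SignType) : Prop :=
  (∀ i, c i = 0 ∨ x i = 0) ∨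
  (∃ i j, c i = x i ∧ c i ≠ 0 ∧ c j = -(x j) ∧ c j ≠ 0)

/-!
A hyperplane `L` is the kernel of `v ↦ x ⬝ᵥ v` for some `x ≠ 0`. A sign vector `c` is the sign
vector of some `v ∈ L` iff the products `c i * sign (x i)` are either all `0` or take both values
`1` and `-1`: a positive and a negative term of `x ⬝ᵥ v` can always be rescaled to cancel the rest.
The remaining sign vectors are those whose products avoid `-1` or avoid `1` but not both, so with
`t` the number of nonzero entries of `x`, `|sign L| = 3 ^ n - 2 * 3 ^ (n - t) * (2 ^ t - 1)`.
As `3 ^ (n - t) * (2 ^ t - 1)` is nonincreasing in `t`, the extremes are `t = n` and `t = 1`.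
-/

section

open Finset Module

namespace SignType

lemma mul_eq_one_iff_eq_and_ne_zero {a b : SignType} : a * b = 1 ↔ a = b ∧ a ≠ 0 := by
  revert a b; decide

lemma mul_eq_neg_one_iff_eq_neg_and_ne_zero {a b : SignType} : a * b = -1 ↔ a = -b ∧ a ≠ 0 := by
  revert a b; decide

end SignType

lemma signPerp_iff_mul {n : ℕ} {c y : Fin n → SignType} :
    SignPerp c y ↔ (∀ i, c i * y i = 0) ∨ (∃ i, c i * y i = 1) ∧ ∃ j, c j * y j = -1 := by
  simp only [SignPerp, mul_eq_zero, SignType.mul_eq_one_iff_eq_and_ne_zero,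
    SignType.mul_eq_neg_one_iff_eq_neg_and_ne_zero, exists_and_exists_comm, and_assoc]

lemma card_filter_forall_apply {ι α : Type*} [Fintype ι] [DecidableEq ι] [Fintype α]
    (p : ι → α → Prop) [∀ i, DecidablePred (p i)] [DecidablePred fun c : ι → α => ∀ i, p i (c i)] :
    #{c : ι → α | ∀ i, p i (c i)} = ∏ i, #{a | p i a} := by
  rw [← Fintype.card_piFinset]
  congr 1
  ext c
  simp

lemma card_forall_mul_ne {n : ℕ} (y : Fin n → SignType) {u : SignType} (hu : u ≠ 0) :
    #{c : Fin n → SignType | ∀ i, c i * y i ≠ u} = 3 ^ #{i | y i = 0} * 2 ^ #{i | y i ≠ 0} := by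
  have hcoord : ∀ b : SignType, #{a : SignType | a * b ≠ u} = if b = 0 then 3 else 2 := by
    revert u; decide
  rw [card_filter_forall_apply (fun i a => a * y i ≠ u),
    Fintype.prod_congr _ _ fun i => hcoord (y i), prod_ite, prod_const, prod_const]

lemma card_forall_mul_eq_zero {n : ℕ} (y : Fin n → SignType) :
    #{c : Fin n → SignType | ∀ i, c i * y i = 0} = 3 ^ #{i | y i = 0} := by
  have hcoord : ∀ b : SignType, #{a : SignType | a * b = 0} = if b = 0 then 3 else 1 := by
    decide
  rw [card_filter_forall_apply (fun i a => a * y i = 0),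
    Fintype.prod_congr _ _ fun i => hcoord (y i), prod_ite, prod_const, prod_const, one_pow, mul_one]

lemma ncard_setOf_signPerp {n : ℕ} (y : Fin n → SignType) :
    {c | SignPerp c y}.ncard + 2 * (3 ^ (n - #{i | y i ≠ 0}) * (2 ^ #{i | y i ≠ 0} - 1)) =
      3 ^ n := by
  classical
  set t := #{i | y i ≠ 0}
  set A : Finset (Fin n → SignType) := {c | ∀ i, c i * y i ≠ -1}
  set B : Finset (Fin n → SignType) := {c | ∀ i, c i * y i ≠ 1}
  have hzero : ∀ s : SignType, s = 0 ↔ s ≠ -1 ∧ s ≠ 1 := by decide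
  have hAB : A ∩ B = ({c | ∀ i, c i * y i = 0} : Finset (Fin n → SignType)) := by
    ext c; simp [A, B, hzero, forall_and]
  have hcompl : ({c | ¬SignPerp c y} : Finset (Fin n → SignType)) = (A ∪ B) \ (A ∩ B) := by
    ext c
    simp only [mem_filter, mem_univ, true_and, mem_sdiff, mem_union, mem_inter, A, B,
      signPerp_iff_mul, hzero, forall_and, ← not_forall_not]
    tauto
  have hzeros : #{i | y i = 0} = n - t := by
    have := card_filter_add_card_filter_not (s := univ) (fun i => y i = 0)
    simp only [card_univ, Fintype.card_fin] at this
    exact Nat.eq_sub_of_add_eq this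
  have htotal : #{c | SignPerp c y} + #{c | ¬SignPerp c y} = 3 ^ n := by
    rw [card_filter_add_card_filter_not, card_univ, Fintype.card_fun, Fintype.card_fin]
    rfl
  have hA : #A = 3 ^ (n - t) * 2 ^ t := hzeros ▸ card_forall_mul_ne y (by decide)
  have hB : #B = 3 ^ (n - t) * 2 ^ t := hzeros ▸ card_forall_mul_ne y (by decide)
  have hZ : #(A ∩ B) = 3 ^ (n - t) := hAB ▸ hzeros ▸ card_forall_mul_eq_zero y
  have hunion := card_union_add_card_inter A B
  have hsdiff := card_sdiff_add_card_eq_card (inter_subset_union (s := A) (t := B))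
  rw [hcompl] at htotal
  rw [← coe_filter_univ, Set.ncard_coe_finset, Nat.mul_sub, mul_one]
  omega

lemma sign_signType_cast {α : Type*} [Ring α] [LinearOrder α] [IsStrictOrderedRing α]
    (s : SignType) : SignType.sign (s : α) = s := by
  cases s <;> simp

lemma signVec_mul_signVec {n : ℕ} (v x : Fin n → ℝ) (i : Fin n) :
    signVec v i * signVec x i = SignType.sign (v i * x i) :=
  (sign_mul _ _).symm

lemma signVec_mul_of_pos {n : ℕ} {w u : Fin n → ℝ} (hw : ∀ k, 0 < w k) :
    signVec (w * u) = signVec u :=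
  funext fun k => by rw [signVec, Pi.mul_apply, sign_mul, sign_pos (hw k), one_mul, signVec]

lemma signPerp_signVec_of_dotProduct_eq_zero {n : ℕ} {x v : Fin n → ℝ} (h : x ⬝ᵥ v = 0) :
    SignPerp (signVec v) (signVec x) := by
  have hsum : ∑ i, v i * x i = 0 := by simpa [dotProduct, mul_comm] using h
  simp only [signPerp_iff_mul, signVec_mul_signVec, sign_eq_zero_iff, sign_eq_one_iff,
    sign_eq_neg_one_iff]
  by_cases hall : ∀ i, v i * x i = 0
  · exact Or.inl hall
  obtain ⟨i, hi⟩ := not_forall.1 hall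
  refine Or.inr ⟨?_, ?_⟩
  · obtain ⟨k, -, hk⟩ := exists_pos_of_sum_zero_of_exists_nonzero _ hsum ⟨i, mem_univ _, hi⟩
    exact ⟨k, hk⟩
  · have hsum' : ∑ k, -(v k * x k) = 0 := by rw [sum_neg_distrib, hsum, neg_zero]
    obtain ⟨k, -, hk⟩ := exists_pos_of_sum_zero_of_exists_nonzero _ hsum'
      ⟨i, mem_univ _, neg_ne_zero.2 hi⟩
    exact ⟨k, neg_pos.1 hk⟩

-- Only the weights at `i` and `j` differ from `1`; enlarging them moves `x ⬝ᵥ u` up or down.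
lemma exists_pos_dotProduct_mul_eq_zero {n : ℕ} {x u : Fin n → ℝ} {i j : Fin n}
    (hi : 0 < u i * x i) (hj : u j * x j < 0) :
    ∃ w : Fin n → ℝ, (∀ k, 0 < w k) ∧ x ⬝ᵥ (w * u) = 0 := by
  set S := x ⬝ᵥ u
  obtain ⟨a, ha, hai⟩ : ∃ a : ℝ, 0 ≤ a ∧ a * (u i * x i) = (|S| - S) / 2 :=
    ⟨_, div_nonneg (by linarith [le_abs_self S]) hi.le, div_mul_cancel₀ _ hi.ne'⟩
  obtain ⟨b, hb, hbj⟩ : ∃ b : ℝ, 0 ≤ b ∧ b * -(u j * x j) = (|S| + S) / 2 :=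
    ⟨_, div_nonneg (by linarith [neg_abs_le S]) (by linarith), div_mul_cancel₀ _ (by linarith)⟩
  refine ⟨1 + Pi.single i a + Pi.single j b, fun k => ?_, ?_⟩
  · simp only [Pi.add_apply, Pi.one_apply, Pi.single_apply]
    split_ifs <;> linarith
  · rw [add_mul, add_mul, one_mul, ← Pi.single_mul_left, ← Pi.single_mul_left, dotProduct_add,
      dotProduct_add, dotProduct_single, dotProduct_single]
    linear_combination hai - hbj

lemma exists_dotProduct_eq_zero_signVec_eq {n : ℕ} {x : Fin n → ℝ} {c : Fin n → SignType}
    (h : SignPerp c (signVec x)) : ∃ v, x ⬝ᵥ v = 0 ∧ signVec v = c := by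
  set u : Fin n → ℝ := fun k => c k
  have hu : signVec u = c := funext fun k => sign_signType_cast (c k)
  have hterm : ∀ k, c k * signVec x k = SignType.sign (u k * x k) := fun k => by
    rw [← hu, signVec_mul_signVec]
  simp only [signPerp_iff_mul, hterm, sign_eq_zero_iff, sign_eq_one_iff,
    sign_eq_neg_one_iff] at h
  rcases h with hzero | ⟨⟨i, hi⟩, j, hj⟩
  · exact ⟨u, sum_eq_zero fun k _ => by rw [mul_comm, hzero k], hu⟩
  · obtain ⟨w, hw, hwu⟩ := exists_pos_dotProduct_mul_eq_zero hi hj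
    exact ⟨w * u, hwu, (signVec_mul_of_pos hw).trans hu⟩

lemma signSet_ker_dotProduct {n : ℕ} (x : Fin n → ℝ) :
    signSet (LinearMap.ker (dotProductEquiv ℝ (Fin n) x)) = {c | SignPerp c (signVec x)} := by
  ext c
  constructor
  · rintro ⟨v, hv, rfl⟩
    exact signPerp_signVec_of_dotProduct_eq_zero hv
  · intro hc
    obtain ⟨v, hv, rfl⟩ := exists_dotProduct_eq_zero_signVec_eq hc
    exact ⟨v, hv, rfl⟩

lemma Submodule.exists_dual_ne_zero_ker_eq {K V : Type*} [Field K] [AddCommGroup V] [Module K V]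
    [FiniteDimensional K V] {W : Submodule K V} (hW : finrank K W + 1 = finrank K V) :
    ∃ f : Module.Dual K V, f ≠ 0 ∧ LinearMap.ker f = W := by
  have hlt : W < ⊤ := Submodule.lt_top_of_finrank_lt_finrank (by omega)
  obtain ⟨f, hf, hWf⟩ := Submodule.exists_dual_map_eq_bot_of_lt_top hlt inferInstance
  refine ⟨f, hf, (Submodule.eq_of_le_of_finrank_le (LinearMap.le_ker_iff_map.2 hWf) ?_).symm⟩
  have := f.finrank_ker_add_one_of_ne_zero hf
  omega

lemma exists_ne_zero_signSet_eq_setOf_signPerp {n : ℕ} (hn : 1 ≤ n) {L : Submodule ℝ (Fin n → ℝ)}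
    (hL : finrank ℝ L = n - 1) :
    ∃ x : Fin n → ℝ, x ≠ 0 ∧ signSet L = {c | SignPerp c (signVec x)} := by
  obtain ⟨f, hf, rfl⟩ := Submodule.exists_dual_ne_zero_ker_eq (W := L) (by simp; omega)
  refine ⟨(dotProductEquiv ℝ (Fin n)).symm f, by simpa using hf, ?_⟩
  rw [← signSet_ker_dotProduct, LinearEquiv.apply_symm_apply]

lemma exists_ncard_signSet_of_finrank_eq {n : ℕ} (hn : 1 ≤ n) {L : Submodule ℝ (Fin n → ℝ)}
    (hL : finrank ℝ L = n - 1) :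
    ∃ t, 1 ≤ t ∧ t ≤ n ∧ (signSet L).ncard + 2 * (3 ^ (n - t) * (2 ^ t - 1)) = 3 ^ n := by
  obtain ⟨x, hx, hLx⟩ := exists_ne_zero_signSet_eq_setOf_signPerp hn hL
  refine ⟨#{i | signVec x i ≠ 0}, ?_, ?_, hLx ▸ ncard_setOf_signPerp (signVec x)⟩
  · obtain ⟨i, hi⟩ := Function.ne_iff.1 hx
    exact card_pos.2 ⟨i, by simpa [signVec] using hi⟩
  · simpa using card_le_univ (α := Fin n) _

lemma exists_finrank_eq_ncard_signSet {n t : ℕ} (ht : 1 ≤ t) (htn : t ≤ n) :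
    ∃ L : Submodule ℝ (Fin n → ℝ), finrank ℝ L = n - 1 ∧
      (signSet L).ncard + 2 * (3 ^ (n - t) * (2 ^ t - 1)) = 3 ^ n := by
  set x : Fin n → ℝ := fun i => if (i : ℕ) < t then 1 else 0
  have ht' : #{i | signVec x i ≠ 0} = t := by
    simpa [x, signVec, apply_ite SignType.sign, htn] using Fin.card_filter_val_lt (n := n) (m := t)
  have hx : dotProductEquiv ℝ (Fin n) x ≠ 0 :=
    (LinearEquiv.map_ne_zero_iff _).2 fun h => by
      have : t = 0 := by simpa [x] using congrFun h ⟨0, by omega⟩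
      omega
  refine ⟨LinearMap.ker (dotProductEquiv ℝ (Fin n) x), ?_, ?_⟩
  · have := (dotProductEquiv ℝ (Fin n) x).finrank_ker_add_one_of_ne_zero hx
    simp only [finrank_fin_fun] at this
    omega
  · rw [signSet_ker_dotProduct, ← ht']
    exact ncard_setOf_signPerp _

lemma two_pow_add_le {t : ℕ} (ht : 1 ≤ t) (k : ℕ) : 2 ^ (k + t) ≤ 3 ^ k * (2 ^ t - 1) + 1 := by
  have h2t : 2 ≤ 2 ^ t := Nat.le_self_pow (by omega) 2
  induction k with
  | zero => simp; omega
  | succ k ih =>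
    have hpos : 1 * 1 ≤ 3 ^ k * (2 ^ t - 1) :=
      Nat.mul_le_mul (Nat.one_le_pow _ _ (by norm_num)) (by omega)
    have e2 : 2 ^ (k + 1 + t) = 2 * 2 ^ (k + t) := by ring
    have e3 : 3 ^ (k + 1) * (2 ^ t - 1) = 3 * (3 ^ k * (2 ^ t - 1)) := by ring
    omega

lemma two_pow_sub_one_le_three_pow (m : ℕ) : 2 ^ (m + 1) - 1 ≤ 3 ^ m := by
  induction m with
  | zero => simp
  | succ m ih =>
    have e2 : 2 ^ (m + 1 + 1) = 2 * 2 ^ (m + 1) := by ring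
    have e3 : 3 ^ (m + 1) = 3 * 3 ^ m := by ring
    have : 1 ≤ 3 ^ m := Nat.one_le_pow _ _ (by norm_num)
    omega

end

theorem stmt_13 {n : ℕ} (hn : 2 ≤ n) :
    IsGreatest {c : ℕ | ∃ L : Submodule ℝ (Fin n → ℝ),
        Module.finrank ℝ L = n - 1 ∧ (signSet L).ncard = c} (3 ^ n - 2 * (2 ^ n - 1)) ∧
    IsLeast {c : ℕ | ∃ L : Submodule ℝ (Fin n → ℝ),
        Module.finrank ℝ L = n - 1 ∧ (signSet L).ncard = c} (3 ^ (n - 1)) := by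
  have hn1 : 1 ≤ n := by omega
  have h3n : 3 ^ n = 3 * 3 ^ (n - 1) := by rw [← pow_succ', Nat.sub_add_cancel hn1]
  refine ⟨⟨?_, ?_⟩, ⟨?_, ?_⟩⟩
  · obtain ⟨L, hL, hc⟩ := exists_finrank_eq_ncard_signSet hn1 le_rfl
    rw [Nat.sub_self, pow_zero, one_mul] at hc
    exact ⟨L, hL, by omega⟩
  · rintro _ ⟨L, hL, rfl⟩
    obtain ⟨t, ht, htn, hc⟩ := exists_ncard_signSet_of_finrank_eq hn1 hL
    have := two_pow_add_le ht (n - t)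
    rw [Nat.sub_add_cancel htn] at this
    omega
  · obtain ⟨L, hL, hc⟩ := exists_finrank_eq_ncard_signSet le_rfl hn1
    rw [pow_one] at hc
    exact ⟨L, hL, by omega⟩
  · rintro _ ⟨L, hL, rfl⟩
    obtain ⟨t, ht, htn, hc⟩ := exists_ncard_signSet_of_finrank_eq hn1 hL
    have : 3 ^ (n - t) * (2 ^ t - 1) ≤ 3 ^ (n - 1) :=
      calc 3 ^ (n - t) * (2 ^ t - 1)
          ≤ 3 ^ (n - t) * 3 ^ (t - 1) := by
            gcongr; simpa [Nat.sub_add_cancel ht] using two_pow_sub_one_le_three_pow (t - 1)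
        _ = 3 ^ (n - 1) := by rw [← pow_add]; congr 1; omega
    omega
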